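/- Let Y be a nonnegative random variable with distribution function F, and fix constants θ̃ > 0, γ > 0, E > 0, M̄ ∈ ℝ with d* := θ̃/(γE) + M̄/E ≥ 0. Over all measurable indemnity functions I with 0 ≤ I(y) ≤ y, the functional J(I) = −E(1+θ̃)𝔼[I(Y)] − E·𝔼[Y − I(Y)] + γ M̄ E 𝔼[Y − I(Y)] − (γE²/2)𝔼[(Y − I(Y))²] is maximized by the deductible indemnity I*(y) = max(y − d*, 0). -/

import Mathlib

/-!
Writing `r = y - i` for the retained loss, the integrand of `J` is
`-E(1+θ̃)y + (γE²/2)(d*² - (r - d*)²)`: up to a term free of `i` it is a concave parabola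
in `r` with vertex at `d*`. The deductible retention `r = min y d*` is the point of `(-∞, y]`
closest to `d*`, so it maximizes the integrand pointwise, and integrating preserves the
inequality.
-/

open MeasureTheory

noncomputable def indemnityGain (θt γ E Mbar y i : ℝ) : ℝ :=
  -E * (1 + θt) * i - E * (y - i) + γ * Mbar * E * (y - i) - γ * E ^ 2 / 2 * (y - i) ^ 2

section Pointwise

variable {θt γ E Mbar dstar : ℝ}

lemma indemnityGain_eq_sub_sq (hγ : γ ≠ 0) (hE : E ≠ 0)
    (hdstar : dstar = θt / (γ * E) + Mbar / E) (y i : ℝ) :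
    indemnityGain θt γ E Mbar y i =
      -E * (1 + θt) * y + γ * E ^ 2 / 2 * (dstar ^ 2 - (y - i - dstar) ^ 2) := by
  subst hdstar
  unfold indemnityGain
  field_simp
  ring

lemma sq_min_zero_le_sq {a b : ℝ} (h : b ≤ a) : min a 0 ^ 2 ≤ b ^ 2 := by
  rcases le_total a 0 with ha | ha
  · rw [min_eq_left ha]
    nlinarith
  · rw [min_eq_right ha, sq, zero_mul]
    positivity

lemma indemnityGain_le_deductible (hγ : 0 < γ) (hE : E ≠ 0)
    (hdstar : dstar = θt / (γ * E) + Mbar / E) {y i : ℝ} (hi : 0 ≤ i) :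
    indemnityGain θt γ E Mbar y i ≤ indemnityGain θt γ E Mbar y (max (y - dstar) 0) := by
  rw [indemnityGain_eq_sub_sq hγ.ne' hE hdstar, indemnityGain_eq_sub_sq hγ.ne' hE hdstar]
  have hret : y - max (y - dstar) 0 - dstar = min (y - dstar) 0 := by
    rcases le_total (y - dstar) 0 with h | h
    · rw [max_eq_right h, min_eq_left h]
      ring
    · rw [max_eq_left h, min_eq_right h]
      ring
  have hsq : min (y - dstar) 0 ^ 2 ≤ (y - i - dstar) ^ 2 := sq_min_zero_le_sq (by linarith)
  rw [hret]
  gcongr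

end Pointwise

section Integration

variable {Ω : Type*} [MeasurableSpace Ω] {μ : Measure Ω} {Y X : Ω → ℝ}

lemma integrable_indemnityGain (θt γ E Mbar : ℝ) (hY : Integrable Y μ) (hX : Integrable X μ)
    (hR : Integrable (fun ω => (Y ω - X ω) ^ 2) μ) :
    Integrable (fun ω => indemnityGain θt γ E Mbar (Y ω) (X ω)) μ :=
  (((hX.const_mul _).sub ((hY.sub hX).const_mul _)).add ((hY.sub hX).const_mul _)).sub
    (hR.const_mul _)

lemma integral_indemnityGain (θt γ E Mbar : ℝ) (hY : Integrable Y μ) (hX : Integrable X μ)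
    (hR : Integrable (fun ω => (Y ω - X ω) ^ 2) μ) :
    ∫ ω, indemnityGain θt γ E Mbar (Y ω) (X ω) ∂μ =
      -E * (1 + θt) * (∫ ω, X ω ∂μ) - E * (∫ ω, (Y ω - X ω) ∂μ)
        + γ * Mbar * E * (∫ ω, (Y ω - X ω) ∂μ)
        - γ * E ^ 2 / 2 * (∫ ω, (Y ω - X ω) ^ 2 ∂μ) := by
  have hR₁ : Integrable (fun ω => Y ω - X ω) μ := hY.sub hX
  simp only [indemnityGain]
  rw [integral_sub, integral_add, integral_sub, integral_const_mul, integral_const_mul,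
    integral_const_mul, integral_const_mul]
  all_goals first
    | exact Integrable.const_mul ‹_› _
    | exact ((hX.const_mul _).sub (hR₁.const_mul _))
    | exact ((hX.const_mul _).sub (hR₁.const_mul _)).add (hR₁.const_mul _)

variable {I : ℝ → ℝ}

lemma integrable_comp_of_admissible (hY : Integrable Y μ) (hYpos : ∀ ω, 0 ≤ Y ω)
    (hIm : Measurable I) (hIb : ∀ y, 0 ≤ y → 0 ≤ I y ∧ I y ≤ y) :
    Integrable (fun ω => I (Y ω)) μ := by
  refine hY.mono (hIm.comp_aemeasurable hY.aemeasurable).aestronglyMeasurable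
    (Filter.Eventually.of_forall fun ω => ?_)
  obtain ⟨h0, hle⟩ := hIb (Y ω) (hYpos ω)
  rw [Real.norm_of_nonneg h0, Real.norm_of_nonneg (hYpos ω)]
  exact hle

lemma integrable_sq_retention_of_admissible (hY : Integrable Y μ)
    (hY2 : Integrable (fun ω => Y ω ^ 2) μ) (hYpos : ∀ ω, 0 ≤ Y ω)
    (hIm : Measurable I) (hIb : ∀ y, 0 ≤ y → 0 ≤ I y ∧ I y ≤ y) :
    Integrable (fun ω => (Y ω - I (Y ω)) ^ 2) μ := by
  have hI := integrable_comp_of_admissible (μ := μ) hY hYpos hIm hIb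
  refine hY2.mono ((hY.sub hI).aestronglyMeasurable.pow 2)
    (Filter.Eventually.of_forall fun ω => ?_)
  obtain ⟨h0, hle⟩ := hIb (Y ω) (hYpos ω)
  rw [Real.norm_of_nonneg (sq_nonneg _), Real.norm_of_nonneg (sq_nonneg _)]
  exact pow_le_pow_left₀ (by linarith) (by linarith) 2

lemma integrable_sq_deductible_retention [IsFiniteMeasure μ] (hY : Integrable Y μ)
    (hY2 : Integrable (fun ω => Y ω ^ 2) μ) (d : ℝ) :
    Integrable (fun ω => (Y ω - max (Y ω - d) 0) ^ 2) μ := by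
  refine (hY2.add (integrable_const (d ^ 2))).mono'
    ((hY.sub (hY.sub (integrable_const d)).pos_part).aestronglyMeasurable.pow 2)
    (Filter.Eventually.of_forall fun ω => ?_)
  rw [Real.norm_of_nonneg (sq_nonneg _), Pi.add_apply]
  rcases le_total (Y ω - d) 0 with h | h
  · rw [max_eq_right h, sub_zero]
    nlinarith [sq_nonneg d]
  · rw [max_eq_left h, sub_sub_cancel]
    nlinarith [sq_nonneg (Y ω)]

end Integration

theorem stmt_2_general {Ω : Type*} [MeasureSpace Ω] [IsProbabilityMeasure (volume : Measure Ω)]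
    (Y : Ω → ℝ) (hYpos : ∀ ω, 0 ≤ Y ω)
    (hYint : Integrable Y) (hY2int : Integrable (fun ω => (Y ω) ^ 2))
    (θt γ E Mbar : ℝ) (hγ : 0 < γ) (hE : 0 < E)
    (dstar : ℝ) (hdstar : dstar = θt / (γ * E) + Mbar / E)
    (J : (ℝ → ℝ) → ℝ)
    (hJ : ∀ I : ℝ → ℝ, J I =
      -E * (1 + θt) * (∫ ω, I (Y ω))
      - E * (∫ ω, (Y ω - I (Y ω)))
      + γ * Mbar * E * (∫ ω, (Y ω - I (Y ω)))
      - γ * E ^ 2 / 2 * (∫ ω, (Y ω - I (Y ω)) ^ 2)) :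
    ∀ I : ℝ → ℝ, Measurable I → (∀ y : ℝ, 0 ≤ y → 0 ≤ I y ∧ I y ≤ y) →
      J I ≤ J (fun y => max (y - dstar) 0) := by
  intro I hIm hIb
  have hI := integrable_comp_of_admissible hYint hYpos hIm hIb
  have hIR := integrable_sq_retention_of_admissible hYint hY2int hYpos hIm hIb
  have hD : Integrable (fun ω => max (Y ω - dstar) 0) :=
    (hYint.sub (integrable_const dstar)).pos_part
  have hDR := integrable_sq_deductible_retention hYint hY2int dstar
  rw [hJ, hJ, ← integral_indemnityGain θt γ E Mbar hYint hI hIR,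
    ← integral_indemnityGain θt γ E Mbar hYint hD hDR]
  exact integral_mono (integrable_indemnityGain θt γ E Mbar hYint hI hIR)
    (integrable_indemnityGain θt γ E Mbar hYint hD hDR)
    fun ω => indemnityGain_le_deductible hγ hE.ne' hdstar (hIb (Y ω) (hYpos ω)).1

/-- Optimality of the deductible (stop-loss) indemnity: among all measurable
indemnity functions `I` with `0 ≤ I(y) ≤ y`, the functional
`J(I) = −E(1+θ̃)𝔼[I(Y)] − E𝔼[Y−I(Y)] + γM̄E𝔼[Y−I(Y)] − (γE²/2)𝔼[(Y−I(Y))²]`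
is maximized by `I*(y) = max(y − d*, 0)` with `d* = θ̃/(γE) + M̄/E ≥ 0`. -/
theorem stmt_2 {Ω : Type*} [MeasureSpace Ω] [IsProbabilityMeasure (volume : Measure Ω)]
    (Y : Ω → ℝ) (hYmeas : Measurable Y) (hYpos : ∀ ω, 0 ≤ Y ω)
    (hYint : Integrable Y) (hY2int : Integrable (fun ω => (Y ω) ^ 2))
    (θt γ E Mbar : ℝ) (hθ : 0 < θt) (hγ : 0 < γ) (hE : 0 < E)
    (dstar : ℝ) (hdstar : dstar = θt / (γ * E) + Mbar / E) (hd : 0 ≤ dstar)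
    (J : (ℝ → ℝ) → ℝ)
    (hJ : ∀ I : ℝ → ℝ, J I =
      -E * (1 + θt) * (∫ ω, I (Y ω))
      - E * (∫ ω, (Y ω - I (Y ω)))
      + γ * Mbar * E * (∫ ω, (Y ω - I (Y ω)))
      - γ * E ^ 2 / 2 * (∫ ω, (Y ω - I (Y ω)) ^ 2)) :
    ∀ I : ℝ → ℝ, Measurable I → (∀ y : ℝ, 0 ≤ y → 0 ≤ I y ∧ I y ≤ y) →
      J I ≤ J (fun y => max (y - dstar) 0) :=
  stmt_2_general Y hYpos hYint hY2int θt γ E Mbar hγ hE dstar hdstar J hJ
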